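/- Let A ∈ ℚ^{M_{p×q}} be a recurrence matrix over the rationals. Then there exists a positive integer N such that N^{n+1}·A[U,W] ∈ ℤ for every pair of words (U,W) of length n. -/

import Mathlib

/-- Functions on the monoid `M_{p×q}` of pairs of equal-length words over
alphabets of sizes `p` and `q`, with values in `K`. -/
abbrev RM (K : Type) [Field K] (p q : ℕ) : Type :=
  (n : ℕ) → (Fin n → Fin p) → (Fin n → Fin q) → K

/-- The shift `ρ(S,T)` acting on `K^{M_{p×q}}`: `(ρ(S,T)A)[U,W] = A[US,WT]`. -/
def shiftRM {K : Type} [Field K] {p q m : ℕ} (S : Fin m → Fin p) (T : Fin m → Fin q)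
    (A : RM K p q) : RM K p q :=
  fun n U W => A (n + m) (Fin.append U S) (Fin.append W T)
/-- The recursive closure of `A`: the span of all shifts of `A`. -/
def recClosure {K : Type} [Field K] {p q : ℕ} (A : RM K p q) : Submodule K (RM K p q) :=
  Submodule.span K {B | ∃ (m : ℕ) (S : Fin m → Fin p) (T : Fin m → Fin q), B = shiftRM S T A}

/- ---------- auxiliary material ---------- -/

lemma RM_cast {K : Type} [Field K] {p q : ℕ} (A : RM K p q) {n₁ n₂ : ℕ} (h : n₁ = n₂)
    (U : Fin n₂ → Fin p) (W : Fin n₂ → Fin q) :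
    A n₁ (U ∘ Fin.cast h) (W ∘ Fin.cast h) = A n₂ U W := by
  subst h; rfl

lemma shiftRM_nil {K : Type} [Field K] {p q : ℕ} (A : RM K p q) :
    shiftRM Fin.elim0 Fin.elim0 A = A := by
  funext n U W
  show A (n + 0) (Fin.append U Fin.elim0) (Fin.append W Fin.elim0) = A n U W
  rw [Fin.append_elim0, Fin.append_elim0]
  exact RM_cast A (Nat.add_zero n) U W

/-- The single-letter shift as a linear map. -/
def shiftL (p q : ℕ) (s : Fin p) (t : Fin q) : RM ℚ p q →ₗ[ℚ] RM ℚ p q where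
  toFun := shiftRM (fun _ : Fin 1 => s) (fun _ : Fin 1 => t)
  map_add' := fun _ _ => rfl
  map_smul' := fun _ _ => rfl

lemma shiftL_shiftRM (p q : ℕ) (s : Fin p) (t : Fin q) {m : ℕ} (S : Fin m → Fin p)
    (T : Fin m → Fin q) (A : RM ℚ p q) :
    shiftL p q s t (shiftRM S T A) = shiftRM (Fin.cons s S) (Fin.cons t T) A := by
  funext n U W
  show A (n + 1 + m) (Fin.append (Fin.append U fun _ => s) S)
      (Fin.append (Fin.append W fun _ => t) T)
    = A (n + (m + 1)) (Fin.append U (Fin.cons s S)) (Fin.append W (Fin.cons t T))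
  rw [Fin.append_right_eq_snoc U fun _ => s, Fin.append_right_eq_snoc W fun _ => t,
    Fin.append_left_snoc, Fin.append_left_snoc]
  exact RM_cast A (Nat.succ_add_eq_add_succ n m) _ _

lemma shiftL_mem (p q : ℕ) (A : RM ℚ p q) (s : Fin p) (t : Fin q) :
    ∀ x ∈ recClosure A, shiftL p q s t x ∈ recClosure A := by
  intro x hx
  induction hx using Submodule.span_induction with
  | mem g hg =>
    obtain ⟨m, S, T, rfl⟩ := hg
    rw [shiftL_shiftRM]
    exact Submodule.subset_span ⟨m + 1, _, _, rfl⟩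
  | zero => simp only [map_zero]; exact (recClosure A).zero_mem
  | add x y _ _ hx hy => simpa [map_add] using Submodule.add_mem _ hx hy
  | smul c x _ hx => simpa [map_smul] using Submodule.smul_mem _ c hx

/-- evaluation at a point, as a linear map -/
def evalL (p q : ℕ) (n : ℕ) (U : Fin n → Fin p) (W : Fin n → Fin q) :
    RM ℚ p q →ₗ[ℚ] ℚ where
  toFun := fun B => B n U W
  map_add' := fun _ _ => rfl
  map_smul' := fun _ _ => rfl

lemma nat_mul_mem_intRange {x : ℚ} {N : ℕ} (h : x.den ∣ N) :
    (N : ℚ) * x ∈ (Int.castRingHom ℚ).range := by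
  obtain ⟨c, hc⟩ := h
  refine ⟨(c : ℤ) * x.num, ?_⟩
  have hden : (x.den : ℚ) ≠ 0 := Nat.cast_ne_zero.mpr x.den_nz
  have hd' : (x.den : ℚ) * x = (x.num : ℚ) := by
    nth_rewrite 2 [← Rat.num_div_den x]
    rw [mul_comm, div_mul_cancel₀ _ hden]
  subst hc
  rw [eq_intCast]
  push_cast
  rw [mul_comm ((x.den : ℚ)) ((c : ℚ)), mul_assoc, hd']

/-- For a rational recurrence matrix there is a positive integer N such that
N^(n+1)·A[U,W] is an integer for all words (U,W) of length n. -/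
theorem exists_denominator_of_recurrence (p q : ℕ) (A : RM ℚ p q)
    (hA : FiniteDimensional ℚ ↥(recClosure A)) :
    ∃ N : ℕ, 0 < N ∧ ∀ (n : ℕ) (U : Fin n → Fin p) (W : Fin n → Fin q),
      ∃ z : ℤ, (N : ℚ) ^ (n + 1) * A n U W = (z : ℚ) := by
  classical
  set V := recClosure A with hV
  have hAmem : A ∈ V := by
    refine Submodule.subset_span ⟨0, Fin.elim0, Fin.elim0, ?_⟩
    rw [shiftRM_nil]
  set d := Module.finrank ℚ V with hd
  set b : Module.Basis (Fin d) ℚ V := Module.finBasis ℚ V with hb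
  -- restricted shifts and their matrices
  set f : Fin p → Fin q → (V →ₗ[ℚ] V) :=
    fun s t => (shiftL p q s t).restrict (fun x hx => shiftL_mem p q A s t x hx) with hf
  set M : Fin p → Fin q → Matrix (Fin d) (Fin d) ℚ :=
    fun s t => LinearMap.toMatrix b b (f s t) with hM
  set a : Fin d → ℚ := fun j => b.repr ⟨A, hAmem⟩ j with ha
  -- the common denominator
  set N : ℕ :=
    (∏ x : Fin p × Fin q × Fin d × Fin d, (M x.1 x.2.1 x.2.2.1 x.2.2.2).den) *
      ((∏ j : Fin d, (((b j : RM ℚ p q)) 0 Fin.elim0 Fin.elim0).den) *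
        ∏ j : Fin d, (a j).den) with hN
  have hNpos : 0 < N := by
    refine Nat.mul_pos (Finset.prod_pos fun _ _ => (Rat.den_pos _)) (Nat.mul_pos
      (Finset.prod_pos fun _ _ => (Rat.den_pos _))
      (Finset.prod_pos fun _ _ => (Rat.den_pos _)))
  have hdvdM : ∀ (s : Fin p) (t : Fin q) (k j : Fin d), (M s t k j).den ∣ N := by
    intro s t k j
    exact dvd_mul_of_dvd_left
      (Finset.dvd_prod_of_mem _ (Finset.mem_univ (s, t, k, j))) _
  have hdvd0 : ∀ j : Fin d, (((b j : RM ℚ p q)) 0 Fin.elim0 Fin.elim0).den ∣ N := by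
    intro j
    exact dvd_mul_of_dvd_right
      (dvd_mul_of_dvd_left (Finset.dvd_prod_of_mem _ (Finset.mem_univ j)) _) _
  have hdvda : ∀ j : Fin d, (a j).den ∣ N := by
    intro j
    exact dvd_mul_of_dvd_right
      (dvd_mul_of_dvd_right (Finset.dvd_prod_of_mem _ (Finset.mem_univ j)) _) _
  -- expansion of basis vectors under single-letter shift
  have hexp : ∀ (s : Fin p) (t : Fin q) (j : Fin d),
      (shiftL p q s t ((b j : RM ℚ p q))) = ∑ k, M s t k j • ((b k : RM ℚ p q)) := by
    intro s t j
    have h1 : shiftL p q s t ((b j : RM ℚ p q)) = ((f s t (b j) : V) : RM ℚ p q) := by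
      rw [hf]; rfl
    have h2 : f s t (b j) = ∑ k, M s t k j • b k := by
      have := b.sum_repr (f s t (b j))
      rw [← this]
      refine Finset.sum_congr rfl fun k _ => ?_
      congr 1
      exact (LinearMap.toMatrix_apply b b (f s t) k j).symm
    rw [h1, h2]
    push_cast
    rfl
  -- main induction: integrality for basis vectors
  have main : ∀ (n : ℕ) (U : Fin n → Fin p) (W : Fin n → Fin q) (j : Fin d),
      (N : ℚ) ^ (n + 1) * ((b j : RM ℚ p q)) n U W ∈ (Int.castRingHom ℚ).range := by
    intro n
    induction n with
    | zero =>
      intro U W j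
      have hU : U = Fin.elim0 := by funext i; exact i.elim0
      have hW : W = Fin.elim0 := by funext i; exact i.elim0
      rw [hU, hW, pow_one]
      exact nat_mul_mem_intRange (hdvd0 j)
    | succ n ih =>
      intro U W j
      set s := U (Fin.last n)
      set t := W (Fin.last n)
      have hval : ((b j : RM ℚ p q)) (n + 1) U W
          = ∑ k, M s t k j * ((b k : RM ℚ p q)) n (Fin.init U) (Fin.init W) := by
        have h0 : ((b j : RM ℚ p q)) (n + 1) U W
            = (shiftL p q s t ((b j : RM ℚ p q))) n (Fin.init U) (Fin.init W) := by
          have hU : Fin.append (Fin.init U) (fun _ : Fin 1 => s) = U := by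
            rw [Fin.append_right_eq_snoc]
            exact Fin.snoc_init_self U
          have hWW : Fin.append (Fin.init W) (fun _ : Fin 1 => t) = W := by
            rw [Fin.append_right_eq_snoc]
            exact Fin.snoc_init_self W
          show ((b j : RM ℚ p q)) (n + 1) U W
            = ((b j : RM ℚ p q)) (n + 1) (Fin.append (Fin.init U) fun _ => s)
              (Fin.append (Fin.init W) fun _ => t)
          rw [hU, hWW]
        rw [h0, hexp]
        rw [Finset.sum_apply, Finset.sum_apply, Finset.sum_apply]
        rfl
      rw [hval, Finset.mul_sum]
      refine Subring.sum_mem _ fun k _ => ?_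
      have : (N : ℚ) ^ (n + 1 + 1) *
          (M s t k j * ((b k : RM ℚ p q)) n (Fin.init U) (Fin.init W))
          = ((N : ℚ) * M s t k j) *
            ((N : ℚ) ^ (n + 1) * ((b k : RM ℚ p q)) n (Fin.init U) (Fin.init W)) := by
        ring
      rw [this]
      exact Subring.mul_mem _ (nat_mul_mem_intRange (hdvdM s t k j))
        (ih (Fin.init U) (Fin.init W) k)
  -- expansion of A in the basis
  have hAexp : ∀ (n : ℕ) (U : Fin n → Fin p) (W : Fin n → Fin q),
      A n U W = ∑ j, a j * ((b j : RM ℚ p q)) n U W := by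
    intro n U W
    have h1 : (⟨A, hAmem⟩ : V) = ∑ j, a j • b j := (b.sum_repr ⟨A, hAmem⟩).symm
    have h2 : A = ∑ j, a j • ((b j : RM ℚ p q)) := by
      have := congrArg (Subtype.val) h1
      simpa using this
    rw [h2, Finset.sum_apply, Finset.sum_apply, Finset.sum_apply]
    rfl
  have mainA : ∀ (n : ℕ) (U : Fin n → Fin p) (W : Fin n → Fin q),
      (N : ℚ) ^ (n + 2) * A n U W ∈ (Int.castRingHom ℚ).range := by
    intro n U W
    rw [hAexp n U W, Finset.mul_sum]
    refine Subring.sum_mem _ fun j _ => ?_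
    have : (N : ℚ) ^ (n + 2) * (a j * ((b j : RM ℚ p q)) n U W)
        = ((N : ℚ) * a j) * ((N : ℚ) ^ (n + 1) * ((b j : RM ℚ p q)) n U W) := by
      ring
    rw [this]
    exact Subring.mul_mem _ (nat_mul_mem_intRange (hdvda j)) (main n U W j)
  -- final answer: N²
  refine ⟨N ^ 2, pow_pos hNpos 2, fun n U W => ?_⟩
  have hpow : ((N ^ 2 : ℕ) : ℚ) ^ (n + 1) = (N : ℚ) ^ n * (N : ℚ) ^ (n + 2) := by
    push_cast
    ring
  have h1 : (N : ℚ) ^ n ∈ (Int.castRingHom ℚ).range := ⟨(N : ℤ) ^ n, by simp⟩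
  have h2 := mainA n U W
  obtain ⟨z, hz⟩ := Subring.mul_mem _ h1 h2
  exact ⟨z, by rw [hpow, mul_assoc, ← hz]; rfl⟩
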